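/- arXiv:1608.07376 — 2 statements merged into one kernel-verified Lean document; each statement's English description precedes it below -/
import Mathlib

section
/- (Coifman–Rochberg on spaces of homogeneous type) Let f be locally integrable on X with Mf(x) < ∞ for μ-almost every x, and let 0 ≤ δ < 1. Then (Mf)^δ ∈ A_1(X); that is, there is a constant C, depending only on δ and the doubling constant C_μ, such that M((Mf)^δ)(x) ≤ C · (Mf(x))^δ for μ-almost every x ∈ X. -/
/-!
Write `Mν` for the centered maximal function of a measure `ν`, so that `Mf = Mν` with
`ν = |f| μ`. Fix a ball `B = B(x, r)` and put `λ = Mν(x)`. For `y ∈ B`, the averages of `ν`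
over balls `B(y, s)` with `s ≥ r` are at most `C² λ` by doubling, so on `B` the function `Mν`
is dominated by `max(M_r ν, C² λ)`, where `M_r` only uses radii `≤ r`. The local part is
controlled by the weak type `(1, 1)` bound from the Vitali covering lemma: the level set
`{M_r ν > 2^k λ} ∩ B` has measure at most `C⁴ 2^{-k} μ(B)`. Summing over the dyadic layers gives
a geometric series with ratio `2^{δ - 1} < 1`, so the average of `(Mν)^δ` over `B` is at most a
constant times `λ^δ`.
-/

open MeasureTheory Metric ENNReal

/-- The centered Hardy--Littlewood maximal operator on `ℝ≥0∞`-valued functions. -/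
noncomputable def centeredMaxFnE {X : Type*} [MetricSpace X] [MeasurableSpace X]
    (μ : Measure X) (g : X → ℝ≥0∞) (x : X) : ℝ≥0∞ :=
  ⨆ (r : ℝ) (_ : 0 < r), (μ (ball x r))⁻¹ * ∫⁻ y in ball x r, g y ∂μ

/-- The centered Hardy--Littlewood maximal function of a real function. -/
noncomputable def centeredMaxFn {X : Type*} [MetricSpace X] [MeasurableSpace X]
    (μ : Measure X) (f : X → ℝ) (x : X) : ℝ≥0∞ :=
  centeredMaxFnE μ (fun y => ENNReal.ofReal |f y|) x

open Set

lemma rpow_le_add_tsum_dyadic {m l : ℝ≥0∞} (hl : l ≠ 0) (hl' : l ≠ ∞) {δ : ℝ} (hδ : 0 ≤ δ) :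
    m ^ δ ≤ l ^ δ + ∑' k : ℕ, (Ioi (2 ^ k * l)).indicator (fun _ => (2 ^ (k + 1) * l) ^ δ) m := by
  rcases le_or_gt m l with hml | hlm
  · exact (rpow_le_rpow hml hδ).trans le_self_add
  rcases eq_or_ne m ∞ with rfl | hm
  · suffices ∑' k : ℕ, (Ioi (2 ^ k * l)).indicator (fun _ => (2 ^ (k + 1) * l) ^ δ) ∞ = ∞ by
      simp [this]
    refine top_unique ?_
    calc ∞ = ∑' _ : ℕ, l ^ δ := (tsum_const_eq_top_of_ne_zero (rpow_pos hl.bot_lt hl').ne').symm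
      _ ≤ _ := ENNReal.tsum_le_tsum fun k => ?_
    rw [indicator_of_mem (show ∞ ∈ Ioi (2 ^ k * l) from mul_lt_top (by simp) hl'.lt_top)]
    exact rpow_le_rpow (le_mul_of_one_le_left' (one_le_pow₀ one_le_two)) hδ
  obtain ⟨k, hk, hk'⟩ : ∃ k : ℕ, 2 ^ k * l < m ∧ m ≤ 2 ^ (k + 1) * l := by
    classical
    have hex : ∃ n : ℕ, m ≤ 2 ^ n * l := by
      obtain ⟨n, hn⟩ := ENNReal.exists_nat_gt (div_ne_top hm hl)
      refine ⟨n, (ENNReal.div_le_iff hl hl').1 (hn.le.trans ?_)⟩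
      exact_mod_cast n.lt_two_pow_self.le
    obtain ⟨k, hk⟩ := Nat.exists_eq_add_one_of_ne_zero (n := Nat.find hex) fun h0 =>
      hlm.not_ge (by simpa [h0] using Nat.find_spec hex)
    exact ⟨k, not_le.1 (Nat.find_min hex (by omega)), hk ▸ Nat.find_spec hex⟩
  calc m ^ δ ≤ (Ioi (2 ^ k * l)).indicator (fun _ => (2 ^ (k + 1) * l) ^ δ) m := by
        rw [indicator_of_mem (show m ∈ Ioi _ from hk)]; exact rpow_le_rpow hk' hδ
    _ ≤ ∑' k : ℕ, (Ioi (2 ^ k * l)).indicator (fun _ => (2 ^ (k + 1) * l) ^ δ) m :=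
        ENNReal.le_tsum k
    _ ≤ _ := le_add_self

lemma lintegral_rpow_le_dyadic {α : Type*} [MeasurableSpace α] {μ : Measure α} {F : α → ℝ≥0∞}
    (hF : Measurable F) {l : ℝ≥0∞} (hl : l ≠ 0) (hl' : l ≠ ∞) {δ : ℝ} (hδ : 0 ≤ δ) :
    ∫⁻ y, F y ^ δ ∂μ ≤
      l ^ δ * μ univ + ∑' k : ℕ, (2 ^ (k + 1) * l) ^ δ * μ {y | 2 ^ k * l < F y} := by
  have hmeas (k : ℕ) : MeasurableSet {y | 2 ^ k * l < F y} := hF measurableSet_Ioi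
  calc ∫⁻ y, F y ^ δ ∂μ
      ≤ ∫⁻ y, l ^ δ + ∑' k : ℕ,
          {y | 2 ^ k * l < F y}.indicator (fun _ => (2 ^ (k + 1) * l) ^ δ) y ∂μ :=
        lintegral_mono fun y => rpow_le_add_tsum_dyadic hl hl' hδ
    _ = _ := by
        rw [lintegral_add_left measurable_const, lintegral_const, lintegral_tsum fun k => ?_]
        · simp_rw [lintegral_indicator_const (hmeas _)]
        exact (measurable_const.indicator (hmeas k)).aemeasurable

lemma tsum_rpow_mul_le_of_two_pow_mul_le {l A : ℝ≥0∞} {δ : ℝ} (hδ : 0 ≤ δ) {a : ℕ → ℝ≥0∞}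
    (ha : ∀ k, 2 ^ k * a k ≤ A) :
    ∑' k : ℕ, (2 ^ (k + 1) * l) ^ δ * a k ≤ 2 ^ δ * (1 - 2 ^ (δ - 1))⁻¹ * l ^ δ * A := by
  have hsplit (k : ℕ) : (2 ^ (k + 1) * l) ^ δ = 2 ^ δ * l ^ δ * (2 ^ (δ - 1)) ^ k * 2 ^ k := by
    rw [mul_rpow_of_nonneg _ _ hδ, ← rpow_natCast, ← rpow_natCast, ← rpow_natCast, ← rpow_mul,
      ← rpow_mul, mul_comm (2 ^ δ) (l ^ δ), mul_assoc, mul_assoc,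
      ← rpow_add _ _ two_ne_zero ofNat_ne_top, ← rpow_add _ _ two_ne_zero ofNat_ne_top, mul_comm]
    congr 2
    push_cast; ring
  calc ∑' k : ℕ, (2 ^ (k + 1) * l) ^ δ * a k
      = ∑' k : ℕ, 2 ^ δ * l ^ δ * (2 ^ (δ - 1)) ^ k * (2 ^ k * a k) := by
        simp_rw [hsplit, mul_assoc]
    _ ≤ ∑' k : ℕ, 2 ^ δ * l ^ δ * (2 ^ (δ - 1)) ^ k * A :=
        ENNReal.tsum_le_tsum fun k => by gcongr; exact ha k
    _ = 2 ^ δ * (1 - 2 ^ (δ - 1))⁻¹ * l ^ δ * A := by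
        rw [ENNReal.tsum_mul_right, ENNReal.tsum_mul_left, ENNReal.tsum_geometric]; ring

lemma Set.PairwiseDisjoint.countable_of_measure_pos {α ι : Type*} [MeasurableSpace α]
    {μ : Measure α} {u : Set ι} {s : ι → Set α} (hd : u.PairwiseDisjoint s)
    (hs : ∀ i, MeasurableSet (s i)) (hpos : ∀ i ∈ u, 0 < μ (s i))
    (hfin : μ (⋃ i ∈ u, s i) ≠ ∞) : u.Countable := by
  have h := Measure.countable_meas_pos_of_disjoint_of_meas_iUnion_ne_top μ
    (As := fun i : u => s i) (fun i => hs i)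
    (fun i j hij => hd i.2 j.2 (Subtype.coe_injective.ne hij)) (by rwa [biUnion_eq_iUnion] at hfin)
  have hall : {i : u | 0 < μ (s i)} = univ := eq_univ_of_forall fun i => hpos i i.2
  rw [hall] at h
  exact countable_coe_iff.1 (countable_univ_iff.1 h)

namespace HomogeneousType

variable {X : Type*} [PseudoMetricSpace X] [MeasurableSpace X]

structure IsDoublingMeasure (μ : Measure X) (C : ℝ≥0∞) : Prop where
  measure_ball_pos : ∀ (x : X) (r : ℝ), 0 < r → 0 < μ (ball x r)
  measure_ball_lt_top : ∀ (x : X) (r : ℝ), 0 < r → μ (ball x r) < ∞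
  measure_ball_two_mul_le : ∀ (x : X) (r : ℝ), 0 < r → μ (ball x (2 * r)) ≤ C * μ (ball x r)

noncomputable def ballAverage (μ ν : Measure X) (r : ℝ) (x : X) : ℝ≥0∞ :=
  (μ (ball x r))⁻¹ * ν (ball x r)

noncomputable def maximalFn (μ ν : Measure X) (x : X) : ℝ≥0∞ :=
  ⨆ (r : ℝ) (_ : 0 < r), ballAverage μ ν r x

/-- Rational radii make the supremum countable, hence measurable; by `ballAverage_le_iSup_rat`
nothing is lost. -/
noncomputable def localMaximalFn (μ ν : Measure X) (R : ℝ) (x : X) : ℝ≥0∞ :=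
  ⨆ q : {q : ℚ // 0 < (q : ℝ) ∧ (q : ℝ) ≤ R}, ballAverage μ ν q x

lemma measure_ball_eq_iSup_rat (ν : Measure X) (x : X) (s : ℝ) :
    ν (ball x s) = ⨆ q : {q : ℚ // 0 < (q : ℝ) ∧ (q : ℝ) < s}, ν (ball x q) := by
  have hunion : ball x s = ⋃ q : {q : ℚ // 0 < (q : ℝ) ∧ (q : ℝ) < s}, ball x q := by
    ext y
    simp only [mem_iUnion, mem_ball]
    constructor
    · intro hy
      obtain ⟨q, hyq, hqs⟩ := exists_rat_btwn hy
      exact ⟨⟨q, dist_nonneg.trans_lt hyq, hqs⟩, hyq⟩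
    · rintro ⟨q, hq⟩
      exact hq.trans q.2.2
  have hdir : Directed (· ⊆ ·) fun q : {q : ℚ // 0 < (q : ℝ) ∧ (q : ℝ) < s} => ball x q := by
    rintro ⟨a, ha⟩ ⟨b, hb⟩
    refine ⟨⟨max a b, by push_cast; exact lt_max_of_lt_left ha.1,
      by push_cast; exact max_lt ha.2 hb.2⟩, ball_subset_ball ?_, ball_subset_ball ?_⟩ <;>
      simp
  rw [hunion, hdir.measure_iUnion]

lemma lowerSemicontinuous_measure_ball (ν : Measure X) (s : ℝ) :
    LowerSemicontinuous fun x : X => ν (ball x s) := by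
  intro x c hc
  dsimp only at hc ⊢
  rw [measure_ball_eq_iSup_rat, gt_iff_lt, lt_iSup_iff] at hc
  obtain ⟨⟨q, _, hqs⟩, hq⟩ := hc
  filter_upwards [ball_mem_nhds x (sub_pos.2 hqs)] with y hy
  refine hq.trans_le (measure_mono (ball_subset_ball' ?_))
  rw [mem_ball, dist_comm] at hy
  exact (add_lt_of_lt_sub_left hy).le

lemma measurable_ballAverage [OpensMeasurableSpace X] (μ ν : Measure X) (s : ℝ) :
    Measurable (ballAverage μ ν s) :=
  (lowerSemicontinuous_measure_ball μ s).measurable.inv.mul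
    (lowerSemicontinuous_measure_ball ν s).measurable

lemma measurable_localMaximalFn [OpensMeasurableSpace X] (μ ν : Measure X) (R : ℝ) :
    Measurable (localMaximalFn μ ν R) :=
  .iSup fun q => measurable_ballAverage μ ν q

lemma ballAverage_le_iSup_rat (μ ν : Measure X) (x : X) (s : ℝ) :
    ballAverage μ ν s x ≤
      ⨆ q : {q : ℚ // 0 < (q : ℝ) ∧ (q : ℝ) < s}, ballAverage μ ν q x := by
  rw [ballAverage, measure_ball_eq_iSup_rat ν x s, ENNReal.mul_iSup]
  exact iSup_mono fun q =>
    mul_le_mul' (ENNReal.inv_le_inv.2 (measure_mono (ball_subset_ball q.2.2.le))) le_rfl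

variable {μ ν : Measure X} {C : ℝ≥0∞}

lemma ballAverage_le_maximalFn (x : X) {s : ℝ} (hs : 0 < s) :
    ballAverage μ ν s x ≤ maximalFn μ ν x :=
  le_iSup₂ (f := fun s (_ : 0 < s) => ballAverage μ ν s x) s hs

lemma mul_measure_ball_le_of_lt_ballAverage {l : ℝ≥0∞} {s : ℝ} {y : X}
    (h : l < ballAverage μ ν s y) : l * μ (ball y s) ≤ ν (ball y s) :=
  ENNReal.mul_le_of_le_div (by rw [ENNReal.div_eq_inv_mul]; exact h.le)

namespace IsDoublingMeasure

lemma measure_ball_two_pow_mul_le (hμ : IsDoublingMeasure μ C) (x : X) {s : ℝ} (hs : 0 < s)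
    (n : ℕ) : μ (ball x (2 ^ n * s)) ≤ C ^ n * μ (ball x s) := by
  induction n with
  | zero => simp
  | succ n ih =>
    calc μ (ball x (2 ^ (n + 1) * s)) = μ (ball x (2 * (2 ^ n * s))) := by ring_nf
      _ ≤ C * μ (ball x (2 ^ n * s)) := hμ.measure_ball_two_mul_le x _ (by positivity)
      _ ≤ C * (C ^ n * μ (ball x s)) := by gcongr
      _ = C ^ (n + 1) * μ (ball x s) := by ring

lemma measure_ball_le_mul_maximalFn (hμ : IsDoublingMeasure μ C) (x : X) {s : ℝ}
    (hs : 0 < s) : ν (ball x s) ≤ μ (ball x s) * maximalFn μ ν x := by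
  calc ν (ball x s) = μ (ball x s) * ballAverage μ ν s x := by
        rw [ballAverage, ← mul_assoc, ENNReal.mul_inv_cancel (hμ.measure_ball_pos x s hs).ne'
          (hμ.measure_ball_lt_top x s hs).ne, one_mul]
    _ ≤ μ (ball x s) * maximalFn μ ν x := by gcongr; exact ballAverage_le_maximalFn x hs

lemma ballAverage_le_of_mem_ball (hμ : IsDoublingMeasure μ C) {x y : X} {r s : ℝ}
    (hy : y ∈ ball x r) (hrs : r ≤ s) :
    ballAverage μ ν s y ≤ C ^ 2 * ballAverage μ ν (2 * s) x := by
  rw [mem_ball] at hy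
  have hs : 0 < s := (dist_nonneg.trans_lt hy).trans_le hrs
  have hμy := hμ.measure_ball_pos y s hs
  have hμx := hμ.measure_ball_pos x (2 * s) (by positivity)
  have hcomp : μ (ball x (2 * s)) ≤ C ^ 2 * μ (ball y s) := by
    refine (measure_mono (ball_subset_ball' ?_)).trans (hμ.measure_ball_two_pow_mul_le y hs 2)
    rw [dist_comm]; linarith
  have hinv : (μ (ball y s))⁻¹ ≤ C ^ 2 * (μ (ball x (2 * s)))⁻¹ := by
    rw [← div_eq_mul_inv, ENNReal.le_div_iff_mul_le (.inl hμx.ne')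
      (.inl (hμ.measure_ball_lt_top x _ (by positivity)).ne), mul_comm, ← div_eq_mul_inv,
      ENNReal.div_le_iff_le_mul (.inl hμy.ne') (.inl (hμ.measure_ball_lt_top y s hs).ne)]
    exact hcomp
  calc ballAverage μ ν s y ≤ C ^ 2 * (μ (ball x (2 * s)))⁻¹ * ν (ball x (2 * s)) := by
        rw [ballAverage]; gcongr; exact ball_subset_ball' (by linarith)
    _ = C ^ 2 * ballAverage μ ν (2 * s) x := by rw [ballAverage, mul_assoc]

lemma maximalFn_le_localMaximalFn_sup (hμ : IsDoublingMeasure μ C) {x y : X} {r : ℝ}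
    (hy : y ∈ ball x r) :
    maximalFn μ ν y ≤ localMaximalFn μ ν r y ⊔ C ^ 2 * maximalFn μ ν x := by
  refine iSup₂_le fun s hs => ?_
  rcases le_or_gt s r with hsr | hrs
  · refine le_sup_of_le_left ((ballAverage_le_iSup_rat μ ν y s).trans (iSup_le fun q => ?_))
    exact le_iSup_of_le ⟨q.1, q.2.1, q.2.2.le.trans hsr⟩ le_rfl
  · refine le_sup_of_le_right ((hμ.ballAverage_le_of_mem_ball hy hrs.le).trans ?_)
    gcongr
    exact ballAverage_le_maximalFn x (by linarith)

lemma maximalFn_eq_zero (hμ : IsDoublingMeasure μ C) {x : X} (hx : maximalFn μ ν x = 0)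
    (y : X) : maximalFn μ ν y = 0 := by
  have hν (s : ℝ) (hs : 0 < s) : ν (ball x s) = 0 := by
    have h := ballAverage_le_maximalFn (μ := μ) (ν := ν) x hs
    rw [hx, nonpos_iff_eq_zero, ballAverage, mul_eq_zero, ENNReal.inv_eq_zero] at h
    exact h.resolve_left (hμ.measure_ball_lt_top x s hs).ne
  refine le_antisymm (iSup₂_le fun s hs => ?_) bot_le
  rw [ballAverage, measure_mono_null (ball_subset_ball' le_rfl) (hν _ (by positivity)),
    mul_zero]

variable [OpensMeasurableSpace X]

lemma mul_measure_lt_localMaximalFn_le (hμ : IsDoublingMeasure μ C) (x : X) {r : ℝ}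
    (hr : 0 < r) (l : ℝ≥0∞) :
    l * μ ({y | l < localMaximalFn μ ν r y} ∩ ball x r) ≤ C ^ 3 * ν (ball x (2 * r)) := by
  set E := {y | l < localMaximalFn μ ν r y} ∩ ball x r
  have hsel (y : E) : ∃ q : ℚ, 0 < (q : ℝ) ∧ (q : ℝ) ≤ r ∧ l < ballAverage μ ν q y := by
    have hy : l < localMaximalFn μ ν r y := y.2.1
    obtain ⟨⟨q, hq⟩, h⟩ := lt_iSup_iff.1 hy
    exact ⟨q, hq.1, hq.2, h⟩
  choose q hq0 hqr hql using hsel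
  have hsub (y : E) : ball (y : X) (q y) ⊆ ball x (2 * r) := by
    have hy := y.2.2
    rw [mem_ball] at hy
    exact ball_subset_ball' (by linarith [hqr y])
  obtain ⟨u, -, hdisj, hcov⟩ := Vitali.exists_disjoint_subfamily_covering_enlargement_closedBall
    univ (fun y : E => (y : X)) (fun y => (q y : ℝ)) r (fun y _ => hqr y) 4 (by norm_num)
  have hdisj' : u.PairwiseDisjoint fun y : E => ball (y : X) (q y) :=
    hdisj.mono_on fun y _ => ball_subset_closedBall
  have hu : u.Countable :=
    hdisj'.countable_of_measure_pos (fun _ => measurableSet_ball)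
      (fun y _ => hμ.measure_ball_pos _ _ (hq0 y))
      (measure_ne_top_of_subset (iUnion₂_subset fun y _ => hsub y)
        (hμ.measure_ball_lt_top x _ (by positivity)).ne)
  have hcovE : E ⊆ ⋃ y ∈ u, ball (y : X) (2 ^ 3 * q y) := by
    intro z hz
    obtain ⟨y, hyu, hzy⟩ := hcov ⟨z, hz⟩ (mem_univ _)
    have hz' := hzy (mem_closedBall_self (hq0 ⟨z, hz⟩).le)
    rw [mem_closedBall] at hz'
    exact mem_biUnion hyu (by rw [mem_ball]; linarith [hq0 y])
  calc l * μ E ≤ l * ∑' y : u, μ (ball (y : X) (2 ^ 3 * q y)) := by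
        gcongr; exact (measure_mono hcovE).trans (measure_biUnion_le μ hu _)
    _ ≤ ∑' y : u, C ^ 3 * (l * μ (ball (y : X) (q y))) := by
        rw [← ENNReal.tsum_mul_left]
        refine ENNReal.tsum_le_tsum fun y => ?_
        rw [mul_left_comm (C ^ 3)]
        gcongr
        exact hμ.measure_ball_two_pow_mul_le _ (hq0 y) 3
    _ ≤ C ^ 3 * ∑' y : u, ν (ball (y : X) (q y)) := by
        rw [ENNReal.tsum_mul_left]
        gcongr with y
        exact mul_measure_ball_le_of_lt_ballAverage (hql y)
    _ = C ^ 3 * ν (⋃ y ∈ u, ball (y : X) (q y)) := by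
        rw [measure_biUnion hu hdisj' fun _ _ => measurableSet_ball]
    _ ≤ C ^ 3 * ν (ball x (2 * r)) := by
        gcongr; exact iUnion₂_subset fun y _ => hsub y

lemma setLIntegral_localMaximalFn_rpow_le (hμ : IsDoublingMeasure μ C) {x : X} {r : ℝ}
    (hr : 0 < r) (hx0 : maximalFn μ ν x ≠ 0) (hx : maximalFn μ ν x ≠ ∞) {δ : ℝ}
    (hδ : 0 ≤ δ) :
    ∫⁻ y in ball x r, localMaximalFn μ ν r y ^ δ ∂μ ≤
      (1 + 2 ^ δ * (1 - 2 ^ (δ - 1))⁻¹ * C ^ 4) * maximalFn μ ν x ^ δ * μ (ball x r) := by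
  set l := maximalFn μ ν x
  have hlevel (k : ℕ) : 2 ^ k * μ.restrict (ball x r) {y | 2 ^ k * l < localMaximalFn μ ν r y}
      ≤ C ^ 4 * μ (ball x r) := by
    rw [Measure.restrict_apply' measurableSet_ball]
    refine (ENNReal.mul_le_mul_iff_right hx0 hx).1 ?_
    calc l * (2 ^ k * μ ({y | 2 ^ k * l < localMaximalFn μ ν r y} ∩ ball x r))
        = 2 ^ k * l * μ ({y | 2 ^ k * l < localMaximalFn μ ν r y} ∩ ball x r) := by ring
      _ ≤ C ^ 3 * ν (ball x (2 * r)) := hμ.mul_measure_lt_localMaximalFn_le x hr _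
      _ ≤ C ^ 3 * (μ (ball x (2 * r)) * l) := by
          gcongr; exact hμ.measure_ball_le_mul_maximalFn x (by positivity)
      _ ≤ C ^ 3 * (C * μ (ball x r) * l) := by
          gcongr; exact hμ.measure_ball_two_mul_le x r hr
      _ = l * (C ^ 4 * μ (ball x r)) := by ring
  calc ∫⁻ y in ball x r, localMaximalFn μ ν r y ^ δ ∂μ
      ≤ l ^ δ * μ.restrict (ball x r) univ + ∑' k : ℕ, (2 ^ (k + 1) * l) ^ δ *
          μ.restrict (ball x r) {y | 2 ^ k * l < localMaximalFn μ ν r y} :=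
        lintegral_rpow_le_dyadic (measurable_localMaximalFn μ ν r) hx0 hx hδ
    _ ≤ l ^ δ * μ (ball x r) + 2 ^ δ * (1 - 2 ^ (δ - 1))⁻¹ * l ^ δ * (C ^ 4 * μ (ball x r)) := by
        rw [Measure.restrict_apply_univ]
        gcongr
        exact tsum_rpow_mul_le_of_two_pow_mul_le hδ hlevel
    _ = _ := by ring

end IsDoublingMeasure

/-- The three terms bound the part of `(Mν)^δ` below `Mν(x)`, the dyadic layers of the local
maximal function, and the averages over large balls. -/
noncomputable def coifmanRochbergConst (C : ℝ≥0∞) (δ : ℝ) : ℝ≥0∞ :=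
  1 + 2 ^ δ * (1 - 2 ^ (δ - 1))⁻¹ * C ^ 4 + (C ^ 2) ^ δ

lemma one_le_coifmanRochbergConst (C : ℝ≥0∞) (δ : ℝ) : 1 ≤ coifmanRochbergConst C δ :=
  le_self_add.trans le_self_add

lemma coifmanRochbergConst_ne_zero (C : ℝ≥0∞) (δ : ℝ) : coifmanRochbergConst C δ ≠ 0 :=
  (zero_lt_one.trans_le (one_le_coifmanRochbergConst C δ)).ne'

lemma coifmanRochbergConst_ne_top {C : ℝ≥0∞} (hC : C ≠ ∞) {δ : ℝ} (hδ0 : 0 ≤ δ)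
    (hδ1 : δ < 1) : coifmanRochbergConst C δ ≠ ∞ := by
  have hq : (2 : ℝ≥0∞) ^ (δ - 1) < 1 := rpow_lt_one_of_one_lt_of_neg one_lt_two (by linarith)
  have hgeom : (1 - (2 : ℝ≥0∞) ^ (δ - 1))⁻¹ ≠ ∞ := inv_ne_top.2 (tsub_pos_of_lt hq).ne'
  have hC2 : C ^ 2 ≠ ∞ := pow_ne_top hC
  unfold coifmanRochbergConst
  finiteness

section MetricSpace

variable {X : Type*} [MetricSpace X] [MeasurableSpace X] {μ ν : Measure X} {C : ℝ≥0∞}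

lemma centeredMaxFnE_eq_maximalFn_withDensity [OpensMeasurableSpace X] (μ : Measure X)
    (g : X → ℝ≥0∞) (x : X) : centeredMaxFnE μ g x = maximalFn μ (μ.withDensity g) x := by
  simp only [centeredMaxFnE, maximalFn, ballAverage, withDensity_apply _ measurableSet_ball]

lemma centeredMaxFnE_le_of_setLIntegral_le (hμ : IsDoublingMeasure μ C) {g : X → ℝ≥0∞}
    {x : X} {c : ℝ≥0∞} (h : ∀ r, 0 < r → ∫⁻ y in ball x r, g y ∂μ ≤ c * μ (ball x r)) :
    centeredMaxFnE μ g x ≤ c := by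
  refine iSup₂_le fun r hr => ?_
  calc (μ (ball x r))⁻¹ * ∫⁻ y in ball x r, g y ∂μ ≤ (μ (ball x r))⁻¹ * (c * μ (ball x r)) := by
        gcongr; exact h r hr
    _ = c := by
        rw [mul_comm c, ← mul_assoc, ENNReal.inv_mul_cancel (hμ.measure_ball_pos x r hr).ne'
          (hμ.measure_ball_lt_top x r hr).ne, one_mul]

lemma centeredMaxFnE_const_le (hμ : IsDoublingMeasure μ C) (c : ℝ≥0∞) (x : X) :
    centeredMaxFnE μ (fun _ => c) x ≤ c :=
  centeredMaxFnE_le_of_setLIntegral_le hμ fun _ _ => (setLIntegral_const _ c).le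

variable [OpensMeasurableSpace X]

lemma centeredMaxFnE_maximalFn_rpow_le_of_ne (hμ : IsDoublingMeasure μ C) {x : X}
    (hx0 : maximalFn μ ν x ≠ 0) (hx : maximalFn μ ν x ≠ ∞) {δ : ℝ} (hδ : 0 ≤ δ) :
    centeredMaxFnE μ (fun y => maximalFn μ ν y ^ δ) x ≤
      coifmanRochbergConst C δ * maximalFn μ ν x ^ δ := by
  refine centeredMaxFnE_le_of_setLIntegral_le hμ fun r hr => ?_
  have hsplit : ∀ y ∈ ball x r, maximalFn μ ν y ^ δ ≤
      localMaximalFn μ ν r y ^ δ + (C ^ 2) ^ δ * maximalFn μ ν x ^ δ := fun y hy =>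
    calc maximalFn μ ν y ^ δ ≤ (localMaximalFn μ ν r y ⊔ C ^ 2 * maximalFn μ ν x) ^ δ :=
          rpow_le_rpow (hμ.maximalFn_le_localMaximalFn_sup hy) hδ
      _ = localMaximalFn μ ν r y ^ δ ⊔ (C ^ 2 * maximalFn μ ν x) ^ δ :=
          (monotone_rpow_of_nonneg hδ).map_sup _ _
      _ ≤ _ := by rw [mul_rpow_of_nonneg _ _ hδ]; exact sup_le le_self_add le_add_self
  calc ∫⁻ y in ball x r, maximalFn μ ν y ^ δ ∂μ
      ≤ ∫⁻ y in ball x r, localMaximalFn μ ν r y ^ δ + (C ^ 2) ^ δ * maximalFn μ ν x ^ δ ∂μ :=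
        setLIntegral_mono
          (((measurable_localMaximalFn μ ν r).pow_const δ).add measurable_const) hsplit
    _ = ∫⁻ y in ball x r, localMaximalFn μ ν r y ^ δ ∂μ +
          (C ^ 2) ^ δ * maximalFn μ ν x ^ δ * μ (ball x r) := by
        rw [lintegral_add_right _ measurable_const, setLIntegral_const]
    _ ≤ (1 + 2 ^ δ * (1 - 2 ^ (δ - 1))⁻¹ * C ^ 4) * maximalFn μ ν x ^ δ * μ (ball x r) +
          (C ^ 2) ^ δ * maximalFn μ ν x ^ δ * μ (ball x r) := by
        gcongr; exact hμ.setLIntegral_localMaximalFn_rpow_le hr hx0 hx hδ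
    _ = coifmanRochbergConst C δ * maximalFn μ ν x ^ δ * μ (ball x r) := by
        rw [coifmanRochbergConst]; ring

/-- Where `Mν(x)` is `0` or `∞` the claim degenerates: `ν = 0`, or the right side is `∞`, or
`δ = 0` and `(Mν)^δ` is constant. -/
lemma centeredMaxFnE_maximalFn_rpow_le (hμ : IsDoublingMeasure μ C) {δ : ℝ} (hδ : 0 ≤ δ)
    (x : X) :
    centeredMaxFnE μ (fun y => maximalFn μ ν y ^ δ) x ≤
      coifmanRochbergConst C δ * maximalFn μ ν x ^ δ := by
  have hconst (h : ∀ y, maximalFn μ ν y ^ δ = maximalFn μ ν x ^ δ) :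
      centeredMaxFnE μ (fun y => maximalFn μ ν y ^ δ) x ≤
        coifmanRochbergConst C δ * maximalFn μ ν x ^ δ := by
    simp only [h]
    exact (centeredMaxFnE_const_le hμ _ x).trans
      (le_mul_of_one_le_left' (one_le_coifmanRochbergConst C δ))
  rcases eq_or_ne (maximalFn μ ν x) 0 with hx0 | hx0
  · exact hconst fun y => by rw [hμ.maximalFn_eq_zero hx0 y, hx0]
  rcases eq_or_ne (maximalFn μ ν x) ∞ with hx | hx
  · rcases hδ.eq_or_lt with rfl | hδ
    · exact hconst fun y => by simp only [rpow_zero]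
    · rw [hx, top_rpow_of_pos hδ, mul_top (coifmanRochbergConst_ne_zero C δ)]
      exact le_top
  exact centeredMaxFnE_maximalFn_rpow_le_of_ne hμ hx0 hx hδ

end MetricSpace

end HomogeneousType

open HomogeneousType

theorem coifman_rochberg_general
    {X : Type*} [MetricSpace X] [MeasurableSpace X] [BorelSpace X]
    (μ : Measure X) (Cμ : ℝ)
    (hdbl : ∀ (x : X) (r : ℝ), 0 < r →
      μ (ball x (2 * r)) ≤ ENNReal.ofReal Cμ * μ (ball x r))
    (hpos : ∀ (x : X) (r : ℝ), 0 < r → 0 < μ (ball x r))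
    (hfin : ∀ (x : X) (r : ℝ), 0 < r → μ (ball x r) < ⊤)
    (f : X → ℝ)
    (δ : ℝ) (hδ0 : 0 ≤ δ) (hδ1 : δ < 1) :
    ∃ C : ℝ, 0 < C ∧
      ∀ᵐ x ∂μ,
        centeredMaxFnE μ (fun y => (centeredMaxFn μ f y) ^ δ) x ≤
          ENNReal.ofReal C * (centeredMaxFn μ f x) ^ δ := by
  have hK := coifmanRochbergConst_ne_top ofReal_ne_top (C := ENNReal.ofReal Cμ) hδ0 hδ1
  refine ⟨(coifmanRochbergConst (ENNReal.ofReal Cμ) δ).toReal,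
    toReal_pos (coifmanRochbergConst_ne_zero _ δ) hK, .of_forall fun x => ?_⟩
  simp only [centeredMaxFn, centeredMaxFnE_eq_maximalFn_withDensity μ fun y => ENNReal.ofReal |f y|,
    ofReal_toReal hK]
  exact centeredMaxFnE_maximalFn_rpow_le ⟨hpos, hfin, hdbl⟩ hδ0 x

/-- **Coifman--Rochberg on spaces of homogeneous type.** If `f` is locally integrable with
`Mf(x) < ∞` for `μ`-a.e. `x`, and `0 ≤ δ < 1`, then `(Mf)^δ ∈ A_1(X)`: there is a constant
`C` (depending only on `δ` and the doubling constant) such that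
`M((Mf)^δ)(x) ≤ C (Mf(x))^δ` for `μ`-a.e. `x`. -/
theorem coifman_rochberg
    {X : Type*} [MetricSpace X] [MeasurableSpace X] [BorelSpace X]
    (μ : Measure X) (Cμ : ℝ) (hCμ : 1 ≤ Cμ)
    (hdbl : ∀ (x : X) (r : ℝ), 0 < r →
      μ (ball x (2 * r)) ≤ ENNReal.ofReal Cμ * μ (ball x r))
    (hpos : ∀ (x : X) (r : ℝ), 0 < r → 0 < μ (ball x r))
    (hfin : ∀ (x : X) (r : ℝ), 0 < r → μ (ball x r) < ⊤)
    (f : X → ℝ) (hfloc : LocallyIntegrable f μ)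
    (hMf : ∀ᵐ x ∂μ, centeredMaxFn μ f x < ⊤)
    (δ : ℝ) (hδ0 : 0 ≤ δ) (hδ1 : δ < 1) :
    ∃ C : ℝ, 0 < C ∧
      ∀ᵐ x ∂μ,
        centeredMaxFnE μ (fun y => (centeredMaxFn μ f y) ^ δ) x ≤
          ENNReal.ofReal C * (centeredMaxFn μ f x) ^ δ :=
  coifman_rochberg_general μ Cμ hdbl hpos hfin f δ hδ0 hδ1
end

section
/- If ω : X₁ × X₂ → (0, ∞) is locally integrable and satisfies the strong A₁ condition M_s ω(x) ≤ C₀ ω(x) for μ-almost every x ∈ X₁ × X₂, then log ω belongs to little bmo(X₁ × X₂), with ‖log ω‖_bmo bounded by a constant depending only on C₀ and the doubling constants of μ₁ and μ₂. -/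
open MeasureTheory Metric ENNReal

/-- The strong maximal operator on a product space, acting on `ℝ≥0∞`-valued functions:
the supremum of averages over all rectangles (products of balls) containing the point. -/
noncomputable def strongMaxFnE {X₁ : Type*} [MetricSpace X₁] [MeasurableSpace X₁]
    {X₂ : Type*} [MetricSpace X₂] [MeasurableSpace X₂]
    (μ : Measure (X₁ × X₂)) (g : X₁ × X₂ → ℝ≥0∞) (p : X₁ × X₂) : ℝ≥0∞ :=
  ⨆ (x₁ : X₁) (r₁ : ℝ) (_ : 0 < r₁) (x₂ : X₂) (r₂ : ℝ) (_ : 0 < r₂)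
    (_ : p ∈ ball x₁ r₁ ×ˢ ball x₂ r₂),
      (μ (ball x₁ r₁ ×ˢ ball x₂ r₂))⁻¹ *
        ∫⁻ q in ball x₁ r₁ ×ˢ ball x₂ r₂, g q ∂μ

/-- Mean oscillation of `f` over a set `R`, normalised by the measure of `R`. -/
noncomputable def meanOsc {Y : Type*} [MeasurableSpace Y]
    (μ : Measure Y) (f : Y → ℝ) (R : Set Y) : ℝ :=
  (μ R).toReal⁻¹ * ∫ p in R, |f p - (μ R).toReal⁻¹ * ∫ q in R, f q ∂μ| ∂μ

/-!
On a rectangle `R`, the strong `A₁` condition says that the average `A` of `ω` over `R` satisfies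
`A ≤ C ω` a.e. on `R`, so `log ω ≥ log A - log C` there, while Jensen's inequality gives
`⨍_R log ω ≤ log A`. A function bounded below by `b` with average at most `b + δ` has mean
oscillation at most `2δ`, hence `‖log ω‖_bmo ≤ 2 log C`.

Averages over `R` are integrals against the conditional probability measure `μ[|R]`. The
measurability of `ω` on rectangles comes from second countability, which holds because a
σ-finite measure that charges every ball admits only countably many disjoint balls.
-/

open ProbabilityTheory Function

namespace Metric

theorem exists_maximal_isSeparated {X : Type*} [PseudoEMetricSpace X] (ε : ℝ≥0∞) (s : Set X) :
    ∃ N, Maximal (fun N ↦ N ⊆ s ∧ IsSeparated ε N) N :=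
  zorn_subset _ fun c hcs hc ↦ ⟨⋃₀ c, ⟨Set.sUnion_subset fun _ hN ↦ (hcs hN).1,
    (Set.pairwise_sUnion hc.directedOn).2 fun _ hN ↦ (hcs hN).2⟩,
    fun _ ↦ Set.subset_sUnion_of_mem⟩

end Metric

theorem secondCountableTopology_of_measure_ball_pos {X : Type*} [PseudoMetricSpace X]
    [MeasurableSpace X] [OpensMeasurableSpace X] (μ : Measure X) [SFinite μ]
    (hpos : ∀ (x : X) (r : ℝ), 0 < r → 0 < μ (ball x r)) : SecondCountableTopology X := by
  refine secondCountable_of_almost_dense_set fun ε hε ↦ ?_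
  obtain ⟨N, hN⟩ := exists_maximal_isSeparated (ENNReal.ofReal ε) (Set.univ : Set X)
  refine ⟨N, ?_, fun x ↦ ?_⟩
  · have hdisj : Pairwise (Disjoint on fun y : N ↦ ball (y : X) (ε / 2)) := by
      intro y z hyz
      refine ball_disjoint_ball ?_
      have : ENNReal.ofReal ε < edist (y : X) z := hN.prop.2 y.2 z.2 (Subtype.coe_ne_coe.2 hyz)
      rw [edist_dist, ENNReal.ofReal_lt_ofReal_iff_of_nonneg hε.le] at this
      linarith
    have := Measure.countable_meas_pos_of_disjoint_iUnion (μ := μ)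
      (fun _ ↦ measurableSet_ball) hdisj
    simp only [hpos _ _ (half_pos hε), Set.ofPred_true, Set.countable_univ_iff] at this
    exact Set.countable_coe_iff.1 this
  · obtain ⟨y, hy, hxy⟩ := IsCover.of_maximal_isSeparated (ε := ε.toNNReal) hN (Set.mem_univ x)
    refine ⟨y, hy, ?_⟩
    have hxy : edist x y ≤ ENNReal.ofReal ε := hxy
    rwa [edist_dist, ENNReal.ofReal_le_ofReal_iff hε.le] at hxy

section ProbabilityMeasure

variable {Ω : Type*} [MeasurableSpace Ω] {P : Measure Ω} {f ω : Ω → ℝ} {C : ℝ}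

theorem integral_pos_of_ae_pos [NeZero P] (hf : Integrable f P) (hf₀ : ∀ᵐ x ∂P, 0 < f x) :
    0 < ∫ x, f x ∂P := by
  rw [integral_pos_iff_support_of_nonneg_ae (hf₀.mono fun _ h ↦ h.le) hf]
  refine pos_iff_ne_zero.2 fun h ↦ ?_
  obtain ⟨x, hx, hx'⟩ :=
    ((hf₀.mono fun _ h ↦ h.ne').and (measure_eq_zero_iff_ae_notMem.1 h)).exists
  exact hx' hx

theorem integrable_log_of_ae_le [IsFiniteMeasure P] {ε : ℝ} (hε : 0 < ε) (hf : Integrable f P)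
    (hεf : ∀ᵐ x ∂P, ε ≤ f x) : Integrable (fun x ↦ Real.log (f x)) P := by
  refine (hf.add (integrable_const |Real.log ε|)).mono'
    (Real.measurable_log.comp_aemeasurable hf.aemeasurable).aestronglyMeasurable ?_
  filter_upwards [hεf] with x hx
  have hfx : 0 < f x := hε.trans_le hx
  show |Real.log (f x)| ≤ f x + |Real.log ε|
  rw [abs_le]
  constructor
  · linarith [Real.log_le_log hε hx, neg_abs_le (Real.log ε)]
  · linarith [Real.log_le_sub_one_of_pos hfx, abs_nonneg (Real.log ε)]

variable [IsProbabilityMeasure P]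

theorem integral_log_le_log_integral (hf : Integrable f P) (hf₀ : ∀ᵐ x ∂P, 0 < f x)
    (hlog : Integrable (fun x ↦ Real.log (f x)) P) :
    ∫ x, Real.log (f x) ∂P ≤ Real.log (∫ x, f x ∂P) := by
  set A := ∫ x, f x ∂P
  have hA : 0 < A := integral_pos_of_ae_pos hf hf₀
  -- `log` lies below its tangent line at `A`
  have htangent : ∀ᵐ x ∂P, Real.log (f x) ≤ Real.log A - 1 + f x / A := by
    filter_upwards [hf₀] with x hx
    have := Real.log_le_sub_one_of_pos (div_pos hx hA)
    rw [Real.log_div hx.ne' hA.ne'] at this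
    linarith
  calc ∫ x, Real.log (f x) ∂P ≤ ∫ x, (Real.log A - 1 + f x / A) ∂P :=
        integral_mono_ae hlog ((integrable_const _).add (hf.div_const A)) htangent
    _ = Real.log A := by
        rw [integral_add (integrable_const _) (hf.div_const A), integral_const, integral_div,
          div_self hA.ne']
        simp

theorem integral_abs_sub_integral_le {b δ : ℝ} (hf : Integrable f P) (hb : ∀ᵐ x ∂P, b ≤ f x)
    (hδ : 0 ≤ δ) (hfδ : ∫ x, f x ∂P ≤ b + δ) :
    ∫ x, |f x - ∫ y, f y ∂P| ∂P ≤ 2 * δ := by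
  set a := ∫ y, f y ∂P
  have hfa : Integrable (fun x ↦ f x - a) P := hf.sub (integrable_const a)
  -- `f` stays above `b ≥ a - δ`, so `|f - a|` exceeds `f - a` by at most `2δ`
  have hpt : ∀ᵐ x ∂P, |f x - a| ≤ (f x - a) + 2 * δ := by
    filter_upwards [hb] with x hx
    rcases le_total a (f x) with h | h
    · rw [abs_of_nonneg (by linarith)]; linarith
    · rw [abs_of_nonpos (by linarith)]; linarith
  calc ∫ x, |f x - a| ∂P ≤ ∫ x, ((f x - a) + 2 * δ) ∂P :=
        integral_mono_ae hfa.abs (hfa.add (integrable_const _)) hpt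
    _ = 2 * δ := by
        rw [integral_add hfa (integrable_const _), integral_sub hf (integrable_const a)]
        simp [a]


theorem integrable_log_and_integral_abs_sub_le_of_ae_integral_le (hC : 1 ≤ C)
    (hω : Integrable ω P) (hω₀ : ∀ᵐ x ∂P, 0 < ω x) (hA₁ : ∀ᵐ x ∂P, ∫ y, ω y ∂P ≤ C * ω x) :
    Integrable (fun x ↦ Real.log (ω x)) P ∧
      ∫ x, |Real.log (ω x) - ∫ y, Real.log (ω y) ∂P| ∂P ≤ 2 * Real.log C := by
  set A := ∫ y, ω y ∂P
  have hC₀ : 0 < C := one_pos.trans_le hC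
  have hA : 0 < A := integral_pos_of_ae_pos hω hω₀
  have hlower : ∀ᵐ x ∂P, A / C ≤ ω x := hA₁.mono fun x hx ↦ by
    rwa [div_le_iff₀ hC₀, mul_comm]
  have hlog := integrable_log_of_ae_le (div_pos hA hC₀) hω hlower
  refine ⟨hlog, integral_abs_sub_integral_le hlog (b := Real.log A - Real.log C) ?_
    (Real.log_nonneg hC) ?_⟩
  · filter_upwards [hlower] with x hx
    rw [← Real.log_div hA.ne' hC₀.ne']
    exact Real.log_le_log (div_pos hA hC₀) hx
  · simpa using integral_log_le_log_integral hω hω₀ hlog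

theorem integrable_and_ae_integral_le_of_ae_lintegral_le (hω₀ : ∀ᵐ x ∂P, 0 ≤ ω x)
    (hω : AEStronglyMeasurable ω P) (hC : 0 ≤ C)
    (hA₁ : ∀ᵐ x ∂P, ∫⁻ y, ENNReal.ofReal (ω y) ∂P ≤ ENNReal.ofReal (C * ω x)) :
    Integrable ω P ∧ ∀ᵐ x ∂P, ∫ y, ω y ∂P ≤ C * ω x := by
  obtain ⟨x, hx⟩ := hA₁.exists
  have hint : Integrable ω P :=
    ⟨hω, (hasFiniteIntegral_iff_ofReal hω₀).2 (hx.trans_lt ENNReal.ofReal_lt_top)⟩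
  refine ⟨hint, ?_⟩
  filter_upwards [hA₁, hω₀] with x hx hx₀
  rwa [← ofReal_integral_eq_lintegral_ofReal hint hω₀,
    ENNReal.ofReal_le_ofReal_iff (mul_nonneg hC hx₀)] at hx

end ProbabilityMeasure

theorem meanOsc_eq_integral_cond {Y : Type*} [MeasurableSpace Y] (μ : Measure Y) (f : Y → ℝ)
    (R : Set Y) : meanOsc μ f R = ∫ p, |f p - ∫ q, f q ∂μ[|R]| ∂μ[|R] := by
  have h (g : Y → ℝ) : (μ R).toReal⁻¹ * ∫ p in R, g p ∂μ = ∫ p, g p ∂μ[|R] := by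
    rw [ProbabilityTheory.cond, integral_smul_measure, ENNReal.toReal_inv, smul_eq_mul]
  simp only [meanOsc, h]

section Rectangle

variable {X₁ X₂ : Type*} [MetricSpace X₁] [MeasurableSpace X₁] [MetricSpace X₂]
  [MeasurableSpace X₂] {μ : Measure (X₁ × X₂)} {x₁ : X₁} {r₁ : ℝ} {x₂ : X₂} {r₂ : ℝ}

theorem lintegral_cond_le_strongMaxFnE (hr₁ : 0 < r₁) (hr₂ : 0 < r₂) (g : X₁ × X₂ → ℝ≥0∞)
    {p : X₁ × X₂} (hp : p ∈ ball x₁ r₁ ×ˢ ball x₂ r₂) :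
    ∫⁻ q, g q ∂μ[|ball x₁ r₁ ×ˢ ball x₂ r₂] ≤ strongMaxFnE μ g p := by
  rw [ProbabilityTheory.cond, lintegral_smul_measure, smul_eq_mul]
  exact le_iSup₂_of_le x₁ r₁ <| le_iSup₂_of_le hr₁ x₂ <| le_iSup₂_of_le r₂ hr₂ <|
    le_iSup_of_le hp le_rfl

theorem integrableOn_log_and_meanOsc_le_of_ae_strongMaxFnE_le [OpensMeasurableSpace X₁]
    [OpensMeasurableSpace X₂] {ω : X₁ × X₂ → ℝ} {C₀ : ℝ} (hr₁ : 0 < r₁) (hr₂ : 0 < r₂)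
    (hR₀ : μ (ball x₁ r₁ ×ˢ ball x₂ r₂) ≠ 0) (hR : μ (ball x₁ r₁ ×ˢ ball x₂ r₂) ≠ ∞)
    (hω₀ : ∀ᵐ p ∂μ, 0 < ω p) (hω : AEStronglyMeasurable ω μ)
    (hA₁ : ∀ᵐ p ∂μ, strongMaxFnE μ (fun q ↦ ENNReal.ofReal (ω q)) p ≤ ENNReal.ofReal (C₀ * ω p)) :
    IntegrableOn (fun p ↦ Real.log (ω p)) (ball x₁ r₁ ×ˢ ball x₂ r₂) μ ∧
      meanOsc μ (fun p ↦ Real.log (ω p)) (ball x₁ r₁ ×ˢ ball x₂ r₂) ≤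
        2 * Real.log (max C₀ 1) := by
  set R := ball x₁ r₁ ×ˢ ball x₂ r₂
  have := cond_isProbabilityMeasure_of_finite hR₀ hR
  have hω₀' : ∀ᵐ p ∂μ[|R], 0 < ω p := cond_absolutelyContinuous.ae_le hω₀
  have hA₁' : ∀ᵐ p ∂μ[|R], ∫⁻ q, ENNReal.ofReal (ω q) ∂μ[|R] ≤
      ENNReal.ofReal (max C₀ 1 * ω p) := by
    filter_upwards [ae_cond_mem (measurableSet_ball.prod measurableSet_ball), hω₀',
      cond_absolutelyContinuous.ae_le hA₁] with p hpR hp₀ hp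
    refine (lintegral_cond_le_strongMaxFnE hr₁ hr₂ _ hpR).trans (hp.trans ?_)
    gcongr
    exact le_max_left _ _
  obtain ⟨hωi, hωA⟩ := integrable_and_ae_integral_le_of_ae_lintegral_le
    (hω₀'.mono fun _ h ↦ h.le) (hω.mono_ac cond_absolutelyContinuous)
    (zero_le_one.trans (le_max_right _ _)) hA₁'
  obtain ⟨hlog, hosc⟩ :=
    integrable_log_and_integral_abs_sub_le_of_ae_integral_le (le_max_right _ _) hωi hω₀' hωA
  exact ⟨(integrable_smul_measure (ENNReal.inv_ne_zero.2 hR) (ENNReal.inv_ne_top.2 hR₀)).1 hlog,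
    (meanOsc_eq_integral_cond μ _ R).trans_le hosc⟩

end Rectangle

theorem log_strong_a1_in_little_bmo_general
    {X₁ : Type*} [MetricSpace X₁] [MeasurableSpace X₁] [BorelSpace X₁]
    {X₂ : Type*} [MetricSpace X₂] [MeasurableSpace X₂] [BorelSpace X₂]
    (μ₁ : Measure X₁) (μ₂ : Measure X₂) [SigmaFinite μ₁] [SigmaFinite μ₂]
    (hpos₁ : ∀ (x : X₁) (r : ℝ), 0 < r → 0 < μ₁ (ball x r))
    (hfin₁ : ∀ (x : X₁) (r : ℝ), 0 < r → μ₁ (ball x r) < ⊤)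
    (hpos₂ : ∀ (x : X₂) (r : ℝ), 0 < r → 0 < μ₂ (ball x r))
    (hfin₂ : ∀ (x : X₂) (r : ℝ), 0 < r → μ₂ (ball x r) < ⊤)
    (ω : X₁ × X₂ → ℝ) (hω0 : ∀ p, 0 < ω p)
    (hωloc : LocallyIntegrable ω (μ₁.prod μ₂))
    (C₀ : ℝ)
    (hA1s : ∀ᵐ p ∂(μ₁.prod μ₂),
      strongMaxFnE (μ₁.prod μ₂) (fun q => ENNReal.ofReal (ω q)) p ≤
        ENNReal.ofReal (C₀ * ω p)) :
    ∃ C : ℝ, 0 < C ∧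
      LocallyIntegrable (fun p => Real.log (ω p)) (μ₁.prod μ₂) ∧
      ∀ (x₁ : X₁) (r₁ : ℝ) (x₂ : X₂) (r₂ : ℝ), 0 < r₁ → 0 < r₂ →
        meanOsc (μ₁.prod μ₂) (fun p => Real.log (ω p))
          (ball x₁ r₁ ×ˢ ball x₂ r₂) ≤ C := by
  have := secondCountableTopology_of_measure_ball_pos μ₁ hpos₁
  have := secondCountableTopology_of_measure_ball_pos μ₂ hpos₂
  have key (x₁ : X₁) (r₁ : ℝ) (x₂ : X₂) (r₂ : ℝ) (hr₁ : 0 < r₁) (hr₂ : 0 < r₂) :=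
    integrableOn_log_and_meanOsc_le_of_ae_strongMaxFnE_le hr₁ hr₂
      (by rw [Measure.prod_prod]; exact mul_ne_zero (hpos₁ x₁ r₁ hr₁).ne' (hpos₂ x₂ r₂ hr₂).ne')
      (by rw [Measure.prod_prod]; exact mul_ne_top (hfin₁ x₁ r₁ hr₁).ne (hfin₂ x₂ r₂ hr₂).ne)
      (ae_of_all _ hω0) hωloc.aestronglyMeasurable hA1s
  have hlogC : 0 ≤ Real.log (max C₀ 1) := Real.log_nonneg (le_max_right _ _)
  refine ⟨2 * Real.log (max C₀ 1) + 1, by linarith, fun p ↦ ?_,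
    fun x₁ r₁ x₂ r₂ hr₁ hr₂ ↦ (key x₁ r₁ x₂ r₂ hr₁ hr₂).2.trans (by linarith)⟩
  exact ⟨_, prod_mem_nhds (ball_mem_nhds _ one_pos) (ball_mem_nhds _ one_pos),
    (key p.1 1 p.2 1 one_pos one_pos).1⟩

/-- **Logarithms of strong `A₁` weights are in little `bmo`.** If `ω : X₁ × X₂ → (0,∞)`
is locally integrable and satisfies `M_s ω ≤ C₀ ω` `μ`-a.e., then `log ω` belongs to little
`bmo(X₁ × X₂)`, with norm bounded by a constant depending only on `C₀` and the doubling
constants. -/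
theorem log_strong_a1_in_little_bmo
    {X₁ : Type*} [MetricSpace X₁] [MeasurableSpace X₁] [BorelSpace X₁]
    {X₂ : Type*} [MetricSpace X₂] [MeasurableSpace X₂] [BorelSpace X₂]
    (μ₁ : Measure X₁) (μ₂ : Measure X₂) [SigmaFinite μ₁] [SigmaFinite μ₂]
    (Cμ₁ Cμ₂ : ℝ) (hCμ₁ : 1 ≤ Cμ₁) (hCμ₂ : 1 ≤ Cμ₂)
    (hdbl₁ : ∀ (x : X₁) (r : ℝ), 0 < r →
      μ₁ (ball x (2 * r)) ≤ ENNReal.ofReal Cμ₁ * μ₁ (ball x r))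
    (hpos₁ : ∀ (x : X₁) (r : ℝ), 0 < r → 0 < μ₁ (ball x r))
    (hfin₁ : ∀ (x : X₁) (r : ℝ), 0 < r → μ₁ (ball x r) < ⊤)
    (hdbl₂ : ∀ (x : X₂) (r : ℝ), 0 < r →
      μ₂ (ball x (2 * r)) ≤ ENNReal.ofReal Cμ₂ * μ₂ (ball x r))
    (hpos₂ : ∀ (x : X₂) (r : ℝ), 0 < r → 0 < μ₂ (ball x r))
    (hfin₂ : ∀ (x : X₂) (r : ℝ), 0 < r → μ₂ (ball x r) < ⊤)
    (ω : X₁ × X₂ → ℝ) (hω0 : ∀ p, 0 < ω p)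
    (hωloc : LocallyIntegrable ω (μ₁.prod μ₂))
    (C₀ : ℝ) (hC₀ : 0 < C₀)
    (hA1s : ∀ᵐ p ∂(μ₁.prod μ₂),
      strongMaxFnE (μ₁.prod μ₂) (fun q => ENNReal.ofReal (ω q)) p ≤
        ENNReal.ofReal (C₀ * ω p)) :
    ∃ C : ℝ, 0 < C ∧
      LocallyIntegrable (fun p => Real.log (ω p)) (μ₁.prod μ₂) ∧
      ∀ (x₁ : X₁) (r₁ : ℝ) (x₂ : X₂) (r₂ : ℝ), 0 < r₁ → 0 < r₂ →
        meanOsc (μ₁.prod μ₂) (fun p => Real.log (ω p))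
          (ball x₁ r₁ ×ˢ ball x₂ r₂) ≤ C :=
  log_strong_a1_in_little_bmo_general μ₁ μ₂ hpos₁ hfin₁ hpos₂ hfin₂ ω hω0 hωloc C₀ hA1s
end
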